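/- arXiv:1910.12466 — 6 statements merged into one kernel-verified Lean document; each statement's English description precedes it below -/
import Mathlib

section
/- Let M be a 2n×2n complex matrix in blocks M = [[A,B],[C,D]] with A,B,C,D square of size n, such that det M = 1 and M̄ᵗ J M = J where J = [[0,-I],[I,0]]. Then det A is a real number. -/
open Matrix

/-- If `M = [[A,B],[C,D]]` is a block matrix with `det M = 1` and `M̄ᵗ J M = J`
(i.e. `M ∈ SU(n,n;ℂ)`), then `det A` is real. -/
theorem detA_real (n : ℕ) (A B C D : Matrix (Fin n) (Fin n) ℂ)
    (hdet : (fromBlocks A B C D).det = 1)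
    (hJ : (fromBlocks A B C D)ᴴ * fromBlocks 0 (-1) 1 0 * fromBlocks A B C D
        = fromBlocks 0 (-1) 1 0) :
    ∃ r : ℝ, A.det = (r : ℂ) := by
  set M : Matrix (Fin n ⊕ Fin n) (Fin n ⊕ Fin n) ℂ := fromBlocks A B C D with hM
  -- left inverse of M
  have hN : (fromBlocks Dᴴ (-Bᴴ) (-Cᴴ) Aᴴ) * M = 1 := by
    have key : (fromBlocks 0 1 (-1) 0 : Matrix (Fin n ⊕ Fin n) (Fin n ⊕ Fin n) ℂ) *
        (Mᴴ * fromBlocks 0 (-1) 1 0 * M) =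
        fromBlocks 0 1 (-1) 0 * fromBlocks 0 (-1) 1 0 := by rw [hJ]
    have hexp : (fromBlocks 0 1 (-1) 0 : Matrix (Fin n ⊕ Fin n) (Fin n ⊕ Fin n) ℂ) *
        (Mᴴ * fromBlocks 0 (-1) 1 0) = fromBlocks Dᴴ (-Bᴴ) (-Cᴴ) Aᴴ := by
      rw [hM, fromBlocks_conjTranspose, fromBlocks_multiply, fromBlocks_multiply]
      simp
    calc (fromBlocks Dᴴ (-Bᴴ) (-Cᴴ) Aᴴ) * M
        = fromBlocks 0 1 (-1) 0 * (Mᴴ * fromBlocks 0 (-1) 1 0 * M) := by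
          rw [← hexp]; simp only [Matrix.mul_assoc]
      _ = fromBlocks 0 1 (-1) 0 * fromBlocks 0 (-1) 1 0 := key
      _ = 1 := by rw [fromBlocks_multiply, ← fromBlocks_one]; simp
  have hN' : M * (fromBlocks Dᴴ (-Bᴴ) (-Cᴴ) Aᴴ) = 1 := mul_eq_one_comm.mp hN
  rw [hM, fromBlocks_multiply, ← fromBlocks_one] at hN'
  have h12 : A * -Bᴴ + B * Aᴴ = 0 := by
    simpa only [Matrix.toBlocks_fromBlocks₁₂] using congrArg Matrix.toBlocks₁₂ hN'
  have h22 : C * -Bᴴ + D * Aᴴ = 1 := by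
    simpa only [Matrix.toBlocks_fromBlocks₂₂] using congrArg Matrix.toBlocks₂₂ hN'
  have hprod : M * fromBlocks 1 (-Bᴴ) 0 Aᴴ = fromBlocks A 0 C 1 := by
    rw [hM, fromBlocks_multiply, h12, h22]
    simp
  have hdets := congrArg Matrix.det hprod
  simp only [Matrix.det_mul, hdet, Matrix.det_fromBlocks_zero₂₁,
    Matrix.det_fromBlocks_zero₁₂, Matrix.det_one, one_mul, mul_one,
    Matrix.det_conjTranspose] at hdets
  exact Complex.conj_eq_iff_real.mp hdets
end

section
/- Let M = [[A,B],[C,D]] ∈ SU(n,n;ℂ). Then det B, det C, and det D are all real numbers. -/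
open Matrix

private lemma detJ_one (n : ℕ) :
    (fromBlocks (0 : Matrix (Fin n) (Fin n) ℂ) (-1 : Matrix (Fin n) (Fin n) ℂ)
      (1 : Matrix (Fin n) (Fin n) ℂ) (0 : Matrix (Fin n) (Fin n) ℂ)).det = 1 := by
  have h : fromBlocks (0 : Matrix (Fin n) (Fin n) ℂ) (-1) 1 0
      = fromBlocks 1 (-1 : Matrix (Fin n) (Fin n) ℂ) (0 : Matrix (Fin n) (Fin n) ℂ) 1
        * fromBlocks 1 (0 : Matrix (Fin n) (Fin n) ℂ) (1 : Matrix (Fin n) (Fin n) ℂ) 1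
        * fromBlocks 1 (-1 : Matrix (Fin n) (Fin n) ℂ) (0 : Matrix (Fin n) (Fin n) ℂ) 1 := by
    simp [fromBlocks_multiply]
  rw [h]
  simp [det_mul, det_fromBlocks_zero₂₁, det_fromBlocks_zero₁₂]

private lemma aux_key (n : ℕ) (A B C D : Matrix (Fin n) (Fin n) ℂ)
    (hdet : (fromBlocks A B C D).det = 1)
    (hJ : (fromBlocks A B C D)ᴴ * fromBlocks 0 (-1) 1 0 * fromBlocks A B C D
        = fromBlocks 0 (-1) 1 0) :
    (starRingEnd ℂ) A.det = A.det ∧ (starRingEnd ℂ) D.det = D.det := by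
  set M := fromBlocks A B C D with hM
  set Jm : Matrix (Fin n ⊕ Fin n) (Fin n ⊕ Fin n) ℂ := fromBlocks 0 (-1) 1 0 with hJm
  have hU : IsUnit M.det := by rw [hdet]; exact isUnit_one
  have hMi : M * M⁻¹ = 1 := mul_nonsing_inv _ hU
  have hJJ : Jm * Jm = -1 := by
    rw [hJm, fromBlocks_multiply, ← fromBlocks_one, fromBlocks_neg]
    simp
  have h2 : Mᴴ * Jm = Jm * M⁻¹ := by
    calc Mᴴ * Jm = Mᴴ * Jm * (M * M⁻¹) := by rw [hMi, mul_one]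
    _ = (Mᴴ * Jm * M) * M⁻¹ := by rw [mul_assoc, mul_assoc, mul_assoc]
    _ = Jm * M⁻¹ := by rw [hJ]
  have h3 : Mᴴ = -(Jm * M⁻¹ * Jm) := by
    have h : Mᴴ * (Jm * Jm) = Jm * M⁻¹ * Jm := by rw [← mul_assoc, h2]
    rw [hJJ, mul_neg_one] at h
    exact neg_eq_iff_eq_neg.mp h
  have h4 : M * Jm * Mᴴ = Jm := by
    rw [h3, mul_neg]
    have e : M * Jm * (Jm * M⁻¹ * Jm) = M * (Jm * Jm) * (M⁻¹ * Jm) := by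
      noncomm_ring
    rw [e, hJJ, mul_neg_one, neg_mul, ← mul_assoc, hMi, one_mul, neg_neg]
  have h5 : fromBlocks (B * Aᴴ + -(A * Bᴴ)) (B * Cᴴ + -(A * Dᴴ))
      (D * Aᴴ + -(C * Bᴴ)) (D * Cᴴ + -(C * Dᴴ)) = fromBlocks 0 (-1) 1 0 := by
    rw [← hJm, ← h4, hM, hJm, fromBlocks_conjTranspose, fromBlocks_multiply,
      fromBlocks_multiply]
    simp [mul_neg]
  have e12 : B * Cᴴ + -(A * Dᴴ) = -1 := by
    have := congrArg Matrix.toBlocks₁₂ h5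
    simpa [Matrix.toBlocks_fromBlocks₁₂] using this
  have e11 : B * Aᴴ + -(A * Bᴴ) = 0 := by
    have := congrArg Matrix.toBlocks₁₁ h5
    simpa [Matrix.toBlocks_fromBlocks₁₁] using this
  have e21 : D * Aᴴ + -(C * Bᴴ) = 1 := by
    have := congrArg Matrix.toBlocks₂₁ h5
    simpa [Matrix.toBlocks_fromBlocks₂₁] using this
  have e22 : D * Cᴴ + -(C * Dᴴ) = 0 := by
    have := congrArg Matrix.toBlocks₂₂ h5
    simpa [Matrix.toBlocks_fromBlocks₂₂] using this
  constructor
  · -- det A real : M * [[1, -Bᴴ],[0, Aᴴ]] = [[A, 0],[C, 1]]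
    have t : M * fromBlocks 1 (-Bᴴ) 0 Aᴴ = fromBlocks A 0 C 1 := by
      rw [hM, fromBlocks_multiply]
      have g1 : A * -Bᴴ + B * Aᴴ = 0 := by
        have : A * -Bᴴ + B * Aᴴ = B * Aᴴ + -(A * Bᴴ) := by
          rw [mul_neg]; abel
        rw [this, e11]
      have g2 : C * -Bᴴ + D * Aᴴ = 1 := by
        have : C * -Bᴴ + D * Aᴴ = D * Aᴴ + -(C * Bᴴ) := by
          rw [mul_neg]; abel
        rw [this, e21]
      rw [g1, g2]
      simp
    have hd := congrArg Matrix.det t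
    rw [det_mul, hdet, one_mul, det_fromBlocks_zero₂₁, det_fromBlocks_zero₁₂,
      det_one, one_mul, mul_one, det_conjTranspose] at hd
    exact hd
  · -- det D real : M * [[Dᴴ, 0],[-Cᴴ, 1]] = [[1, B],[0, D]]
    have t : M * fromBlocks Dᴴ 0 (-Cᴴ) 1 = fromBlocks 1 B 0 D := by
      rw [hM, fromBlocks_multiply]
      have g1 : A * Dᴴ + B * -Cᴴ = 1 := by
        have : A * Dᴴ + B * -Cᴴ = -(B * Cᴴ + -(A * Dᴴ)) := by
          rw [mul_neg]; abel
        rw [this, e12, neg_neg]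
      have g2 : C * Dᴴ + D * -Cᴴ = 0 := by
        have : C * Dᴴ + D * -Cᴴ = -(D * Cᴴ + -(C * Dᴴ)) := by
          rw [mul_neg]; abel
        rw [this, e22, neg_zero]
      rw [g1, g2]
      simp
    have hd := congrArg Matrix.det t
    rw [det_mul, hdet, one_mul, det_fromBlocks_zero₁₂, det_fromBlocks_zero₂₁,
      det_one, one_mul, mul_one, det_conjTranspose] at hd
    exact hd

/-- If `M = [[A,B],[C,D]] ∈ SU(n,n;ℂ)`, then `det B`, `det C` and `det D` are real. -/
theorem detBCD_real (n : ℕ) (A B C D : Matrix (Fin n) (Fin n) ℂ)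
    (hdet : (fromBlocks A B C D).det = 1)
    (hJ : (fromBlocks A B C D)ᴴ * fromBlocks 0 (-1) 1 0 * fromBlocks A B C D
        = fromBlocks 0 (-1) 1 0) :
    (∃ r : ℝ, B.det = (r : ℂ)) ∧ (∃ r : ℝ, C.det = (r : ℂ)) ∧
      (∃ r : ℝ, D.det = (r : ℂ)) := by
  set M := fromBlocks A B C D with hM
  set Jm : Matrix (Fin n ⊕ Fin n) (Fin n ⊕ Fin n) ℂ := fromBlocks 0 (-1) 1 0 with hJm
  -- det D real
  have hD := (aux_key n A B C D hdet hJ).2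
  -- the matrix Jm * M = [[-C, -D],[A, B]] is also in the group
  have hprod : Jm * M = fromBlocks (-C) (-D) A B := by
    rw [hM, hJm, fromBlocks_multiply]
    simp
  have hJJ : Jm * Jm = -1 := by
    rw [hJm, fromBlocks_multiply, ← fromBlocks_one, fromBlocks_neg]
    simp
  have hJH : Jmᴴ = -Jm := by
    rw [hJm, fromBlocks_conjTranspose, fromBlocks_neg]
    simp
  have hdet' : (fromBlocks (-C) (-D) A B).det = 1 := by
    rw [← hprod, det_mul, hdet, mul_one, hJm, detJ_one]
  have hJ' : (fromBlocks (-C) (-D) A B)ᴴ * Jm * fromBlocks (-C) (-D) A B = Jm := by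
    rw [← hprod, conjTranspose_mul, hJH]
    calc (Mᴴ * -Jm) * Jm * (Jm * M) = Mᴴ * (-(Jm * Jm * Jm)) * M := by noncomm_ring
    _ = Mᴴ * Jm * M := by rw [hJJ]; simp
    _ = Jm := hJ
  have hkey := aux_key n (-C) (-D) A B hdet' hJ'
  have hB := hkey.2
  have hC' := hkey.1
  refine ⟨Complex.conj_eq_iff_real.mp hB, ?_, Complex.conj_eq_iff_real.mp hD⟩
  -- from conj (det (-C)) = det (-C) deduce conj (det C) = det C
  rw [det_neg] at hC'
  have hC2 : ((-1 : ℂ) ^ n) * (starRingEnd ℂ) C.det = ((-1 : ℂ) ^ n) * C.det := by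
    simpa using hC'
  have hpow : ((-1 : ℂ) ^ n) ≠ 0 := pow_ne_zero _ (by norm_num)
  exact Complex.conj_eq_iff_real.mp (mul_left_cancel₀ hpow hC2)
end

section
/- Let M = [[A,B],[C,D]] ∈ SU(n,n;ℂ) with A invertible. Then det A / conj(det A) = 1, i.e. det A ∈ ℝ. -/
/-!
Write `J = [[0,-1],[1,0]]`. The relation `Mᴴ J M = J` says `M⁻¹ = -J Mᴴ J = [[Dᴴ,-Bᴴ],[-Cᴴ,Aᴴ]]`,
and reading off blocks of `M M⁻¹ = 1` shows that the Schur complement `S = D - C A⁻¹ B` satisfies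
`S Aᴴ = 1`. Hence `det S = 1 / conj (det A)`, and `det M = det A · det S = det A / conj (det A)`.
-/

open Matrix

section JUnitary

variable {m R : Type*} [Fintype m] [DecidableEq m] [CommRing R] [StarRing R]

theorem fromBlocks_mul_eq_one_of_conjTranspose_mul_J_mul {A B C D : Matrix m m R}
    (hJ : (fromBlocks A B C D)ᴴ * J m R * fromBlocks A B C D = J m R) :
    fromBlocks A B C D * fromBlocks Dᴴ (-Bᴴ) (-Cᴴ) Aᴴ = 1 := by
  have hinv : fromBlocks Dᴴ (-Bᴴ) (-Cᴴ) Aᴴ = -J m R * (fromBlocks A B C D)ᴴ * J m R := by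
    simp only [J, fromBlocks_conjTranspose, fromBlocks_neg, fromBlocks_multiply]
    congr 1 <;> simp
  refine mul_eq_one_comm.mp ?_
  rw [hinv, Matrix.mul_assoc, Matrix.mul_assoc, ← Matrix.mul_assoc _ (J m R), hJ,
    neg_mul, J_squared, neg_neg]

theorem schurComplement_mul_conjTranspose_eq_one {A B C D : Matrix m m R} [Invertible A]
    (h : fromBlocks A B C D * fromBlocks Dᴴ (-Bᴴ) (-Cᴴ) Aᴴ = 1) :
    (D - C * ⅟A * B) * Aᴴ = 1 := by
  rw [fromBlocks_multiply, ← fromBlocks_one] at h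
  have hBA : B * Aᴴ = A * Bᴴ := by
    have h₁₂ := congrArg toBlocks₁₂ h
    simp only [toBlocks_fromBlocks₁₂, mul_neg] at h₁₂
    exact (neg_add_eq_zero.mp h₁₂).symm
  have hDA : D * Aᴴ - C * Bᴴ = 1 := by
    have h₂₂ := congrArg toBlocks₂₂ h
    simpa only [toBlocks_fromBlocks₂₂, mul_neg, neg_add_eq_sub] using h₂₂
  calc (D - C * ⅟A * B) * Aᴴ = D * Aᴴ - C * (⅟A * (B * Aᴴ)) := by
        simp only [Matrix.sub_mul, Matrix.mul_assoc]
    _ = 1 := by rw [hBA, invOf_mul_cancel_left, hDA]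

theorem det_fromBlocks_mul_star_det_of_conjTranspose_mul_J_mul {A B C D : Matrix m m R}
    [Invertible A] (hJ : (fromBlocks A B C D)ᴴ * J m R * fromBlocks A B C D = J m R) :
    (fromBlocks A B C D).det * star A.det = A.det := by
  have hS : (D - C * ⅟A * B).det * star A.det = 1 := by
    rw [← det_conjTranspose, ← det_mul, schurComplement_mul_conjTranspose_eq_one
      (fromBlocks_mul_eq_one_of_conjTranspose_mul_J_mul hJ), det_one]
  rw [det_fromBlocks₁₁, mul_assoc, hS, mul_one]

end JUnitary

/-- For `M = [[A,B],[C,D]] ∈ SU(n,n;ℂ)` with `A` invertible one has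
`det A / conj (det A) = 1`, i.e. `det A` is real. -/
theorem detA_div_conj (n : ℕ) (A B C D : Matrix (Fin n) (Fin n) ℂ)
    (hdet : (fromBlocks A B C D).det = 1)
    (hJ : (fromBlocks A B C D)ᴴ * fromBlocks 0 (-1) 1 0 * fromBlocks A B C D
        = fromBlocks 0 (-1) 1 0)
    (hA : IsUnit A) :
    A.det / (starRingEnd ℂ) A.det = 1 ∧ ∃ r : ℝ, A.det = (r : ℂ) := by
  have := hA.invertible
  have hconj : (starRingEnd ℂ) A.det = A.det := by
    simpa [hdet] using det_fromBlocks_mul_star_det_of_conjTranspose_mul_J_mul hJ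
  have hne : A.det ≠ 0 := ((isUnit_iff_isUnit_det A).mp hA).ne_zero
  exact ⟨by rw [hconj, div_self hne], Complex.conj_eq_iff_real.mp hconj⟩
end

section
/- Define Δ*_{n,K} = { (1/u)·L ∈ SU(n,n;ℂ) : L ∈ O_K^{2n×2n}, u ∈ ℂ, uⁿ ∈ O_K, uⁿ·O_K = I(L)ⁿ }, where I(L) is the O_K-ideal generated by the entries of L. Then Δ*_{n,K} is closed under multiplication: if M = (1/u)L and M' = (1/u')L' lie in Δ*_{n,K}, then so does MM'. -/
open Matrix NumberField

/-- The ideal of `𝓞 K` generated by all entries of a matrix. -/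
def entryIdeal {R : Type*} [CommRing R] {a b : Type*} (L : Matrix a b R) : Ideal R :=
  Ideal.span (Set.range fun p : a × b => L p.1 p.2)

/-- Membership in the extended Hermitian modular group
`Δ*_{n,K} = {(1/u)L ∈ SU(n,n;ℂ) : L ∈ 𝓞 K^{2n×2n}, uⁿ ∈ 𝓞 K, uⁿ𝓞 K = I(L)ⁿ}`. -/
def InExtendedHermitian (n : ℕ) {K : Type*} [Field K] [NumberField K] (ι : K →+* ℂ)
    (M : Matrix (Fin n ⊕ Fin n) (Fin n ⊕ Fin n) ℂ) : Prop :=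
  M.det = 1 ∧ Mᴴ * fromBlocks 0 (-1) 1 0 * M = fromBlocks 0 (-1) 1 0 ∧
    ∃ (u : ℂ) (L : Matrix (Fin n ⊕ Fin n) (Fin n ⊕ Fin n) (𝓞 K)) (w : 𝓞 K),
      u ≠ 0 ∧ M = u⁻¹ • L.map (fun x => ι (algebraMap (𝓞 K) K x)) ∧
      ι (algebraMap (𝓞 K) K w) = u ^ n ∧
      Ideal.span {w} = (entryIdeal L) ^ n

lemma entry_mem_entryIdeal {R : Type*} [CommRing R] {a b : Type*} (L : Matrix a b R)
    (i : a) (j : b) : L i j ∈ entryIdeal L :=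
  Ideal.subset_span ⟨(i, j), rfl⟩

lemma finset_prod_mem_pow {R : Type*} [CommRing R] (I : Ideal R) {α : Type*} (s : Finset α)
    (f : α → R) (h : ∀ a ∈ s, f a ∈ I) : ∏ a ∈ s, f a ∈ I ^ s.card := by
  induction s using Finset.cons_induction with
  | empty => simp
  | cons a s ha ih =>
    rw [Finset.prod_cons, Finset.card_cons, pow_succ']
    exact Ideal.mul_mem_mul (h a (Finset.mem_cons_self a s))
      (ih fun b hb => h b (Finset.mem_cons_of_mem hb))

lemma det_mem_entryIdeal_pow {R : Type*} [CommRing R] {m : Type*} [Fintype m] [DecidableEq m]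
    (L : Matrix m m R) : L.det ∈ entryIdeal L ^ Fintype.card m := by
  rw [Matrix.det_apply]
  refine Ideal.sum_mem _ fun σ _ => ?_
  have hp : ∏ i, L (σ i) i ∈ entryIdeal L ^ Fintype.card m := by
    simpa using finset_prod_mem_pow (entryIdeal L) Finset.univ (fun i => L (σ i) i)
      (fun i _ => entry_mem_entryIdeal L (σ i) i)
  rw [Units.smul_def]
  exact zsmul_mem hp _

lemma entryIdeal_mul_le {R : Type*} [CommRing R] {a b c : Type*} [Fintype b]
    (L : Matrix a b R) (L' : Matrix b c R) :
    entryIdeal (L * L') ≤ entryIdeal L * entryIdeal L' := by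
  refine Ideal.span_le.mpr ?_
  rintro x ⟨⟨i, j⟩, rfl⟩
  simp only [Matrix.mul_apply]
  exact Ideal.sum_mem _ fun k _ =>
    Ideal.mul_mem_mul (entry_mem_entryIdeal L i k) (entry_mem_entryIdeal L' k j)

lemma ideal_eq_of_le_of_sq_eq {A : Type*} [CommRing A] [IsDedekindDomain A] {I J : Ideal A}
    (hJ : J ≠ ⊥) (hle : I ≤ J) (hsq : I ^ 2 = J ^ 2) : I = J := by
  obtain ⟨C, hC⟩ := Ideal.dvd_iff_le.mpr hle
  have h1 : J ^ 2 * C ^ 2 = J ^ 2 * 1 := by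
    rw [mul_one, ← mul_pow, ← hC, hsq]
  have hC1 : C ^ 2 = 1 := mul_left_cancel₀ (pow_ne_zero 2 (by simpa using hJ)) h1
  have hCtop : C = ⊤ := by
    have : (1 : Ideal A) ≤ C := by
      rw [← hC1, sq]; exact Ideal.mul_le_right
    simpa [Ideal.one_eq_top, top_le_iff] using this
  rw [hC, hCtop, Ideal.mul_top]

/-- `Δ*_{n,K}` is closed under multiplication. -/
theorem extendedHermitian_mul_closed (n : ℕ) (K : Type*) [Field K] [NumberField K]
    (ι : K →+* ℂ) (M M' : Matrix (Fin n ⊕ Fin n) (Fin n ⊕ Fin n) ℂ)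
    (hM : InExtendedHermitian n ι M) (hM' : InExtendedHermitian n ι M') :
    InExtendedHermitian n ι (M * M') := by
  obtain ⟨hd, hJ, u, L, w, hu, hML, hw, hI⟩ := hM
  obtain ⟨hd', hJ', u', L', w', hu', hML', hw', hI'⟩ := hM'
  set f : 𝓞 K →+* ℂ := ι.comp (algebraMap (𝓞 K) K) with hf
  have hfinj : Function.Injective f := ι.injective.comp (IsFractionRing.injective (𝓞 K) K)
  have hmapf : ∀ (A : Matrix (Fin n ⊕ Fin n) (Fin n ⊕ Fin n) (𝓞 K)),
      A.map (fun x => ι (algebraMap (𝓞 K) K x)) = A.map f := fun A => rfl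
  have hcard : Fintype.card (Fin n ⊕ Fin n) = n + n := by simp [Fintype.card_sum]
  -- determinant of L equals w^2 (and similarly for L')
  have hdetL : ∀ (M₀ : Matrix (Fin n ⊕ Fin n) (Fin n ⊕ Fin n) ℂ)
      (L₀ : Matrix (Fin n ⊕ Fin n) (Fin n ⊕ Fin n) (𝓞 K)) (u₀ : ℂ) (w₀ : 𝓞 K),
      u₀ ≠ 0 → M₀.det = 1 → M₀ = u₀⁻¹ • L₀.map (fun x => ι (algebraMap (𝓞 K) K x)) →
      ι (algebraMap (𝓞 K) K w₀) = u₀ ^ n → L₀.det = w₀ ^ 2 := by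
    intro M₀ L₀ u₀ w₀ hu₀ hd₀ hML₀ hw₀
    apply hfinj
    have hmap : f L₀.det = ((L₀.map f).det) := (RingHom.map_det f L₀).symm ▸ rfl
    have hfw₀ : f w₀ = u₀ ^ n := hw₀
    have hdet2 : (L₀.map f).det = u₀ ^ (n + n) := by
      have h1 : (u₀⁻¹ • L₀.map f).det = 1 := by rw [← hmapf, ← hML₀]; exact hd₀
      rw [Matrix.det_smul, hcard, inv_pow] at h1
      exact ((inv_mul_eq_one₀ (pow_ne_zero _ hu₀)).mp h1).symm
    rw [map_pow, hmap, hdet2, hfw₀]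
    ring
  have hL2 : L.det = w ^ 2 := hdetL M L u w hu hd hML hw
  have hL'2 : L'.det = w' ^ 2 := hdetL M' L' u' w' hu' hd' hML' hw'
  have hww' : w * w' ≠ 0 := by
    intro h0
    have : f (w * w') = (u * u') ^ n := by
      show ι (algebraMap (𝓞 K) K (w * w')) = _
      simp only [_root_.map_mul, hw, hw', mul_pow]
    rw [h0, map_zero] at this
    exact (pow_ne_zero n (mul_ne_zero hu hu')) this.symm
  refine ⟨by rw [det_mul, hd, hd', one_mul], ?_, u * u', L * L', w * w',
    mul_ne_zero hu hu', ?_, ?_, ?_⟩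
  · rw [conjTranspose_mul,
      show M'ᴴ * Mᴴ * fromBlocks 0 (-1) 1 0 * (M * M')
        = M'ᴴ * (Mᴴ * fromBlocks 0 (-1) 1 0 * M) * M' by
        simp only [Matrix.mul_assoc], hJ, hJ']
  · rw [hML, hML', hmapf, hmapf, hmapf, Matrix.map_mul, Matrix.smul_mul, Matrix.mul_smul,
      smul_smul, mul_inv]
  · simp only [_root_.map_mul, hw, hw', mul_pow]
  · -- the ideal condition
    have hle : entryIdeal (L * L') ^ n ≤ Ideal.span {w * w'} := by
      rw [← Ideal.span_singleton_mul_span_singleton, hI, hI', ← mul_pow]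
      exact pow_le_pow_left' (entryIdeal_mul_le L L') n
    have hsq : (entryIdeal (L * L') ^ n) ^ 2 = (Ideal.span {w * w'}) ^ 2 := by
      refine le_antisymm (by rw [sq, sq]; exact Ideal.mul_mono hle hle) ?_
      have hdet : (L * L').det ∈ (entryIdeal (L * L') ^ n) ^ 2 := by
        have := det_mem_entryIdeal_pow (L * L')
        rwa [hcard, ← two_mul, mul_comm, pow_mul] at this
      have : (w * w') ^ 2 ∈ (entryIdeal (L * L') ^ n) ^ 2 := by
        rwa [det_mul, hL2, hL'2, ← mul_pow] at hdet
      rw [Ideal.span_singleton_pow]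
      exact Ideal.span_le.mpr (by simpa using this)
    exact (ideal_eq_of_le_of_sq_eq (by simpa [Ideal.span_singleton_eq_bot] using hww')
      hle hsq).symm
end

section
/- Let K = ℚ(√(-m)), m squarefree, with ring of integers O_K, and let d ∈ ℕ be a squarefree divisor of the discriminant d_K. Then the ideal A_d = O_K·d + O_K·(m+√(-m)) satisfies A_d² = d·O_K. -/
/-!
Put `ω = m + √-m`, so that `ω² = 2mω - m(m+1)`. The integral power bases `ℤ[√-m]` and, when
`m ≡ 3 mod 4`, `ℤ[(1+√-m)/2]` have discriminants `-4m` and `-m`, which are square multiples of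
`d_K`. Hence the squarefree `d` divides `2m`, is odd when `m ≡ 3 mod 4`, and therefore divides
`m(m+1)` exactly once at each of its primes: `2m = de` and `m(m+1) = df` with `d` coprime to `f`.
Then `ω² = d(eω - f)`, and `A_d² = (d², dω, ω²)` contains `d` because `ad + bf = 1`.
-/

open NumberField Polynomial Module

theorem Nat.not_mul_self_dvd_mul_succ {m p : ℕ} (hm : Squarefree m) (hp : p.Prime)
    (hpm : p ∣ 2 * m) (h3 : m % 4 = 3 → p ∣ m) : ¬ p * p ∣ m * (m + 1) := by
  intro hpp
  by_cases hpm' : p ∣ m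
  · have hcop : p.Coprime (m + 1) :=
      (Nat.coprime_self_add_right.2 (Nat.coprime_one_right m)).coprime_dvd_left hpm'
    exact hp.not_isUnit (hm p ((hcop.mul_left hcop).dvd_of_dvd_mul_right hpp))
  · obtain rfl : p = 2 :=
      (Nat.prime_dvd_prime_iff_eq hp Nat.prime_two).1 ((hp.dvd_mul.1 hpm).resolve_right hpm')
    have h1 : m % 4 = 1 := by omega
    have : m * (m + 1) % 4 = 2 := by rw [Nat.mul_mod, Nat.add_mod, h1]
    omega

theorem Nat.exists_mul_succ_eq_mul_coprime {m d : ℕ} (hm : Squarefree m) (hd : Squarefree d)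
    (h4 : d ∣ 4 * m) (h3 : m % 4 = 3 → d ∣ m) :
    d ∣ 2 * m ∧ ∃ f, m * (m + 1) = d * f ∧ d.Coprime f := by
  have h2 : d ∣ 2 * m := (hd.dvd_pow_iff_dvd two_ne_zero).1 (h4.trans ⟨m, by ring⟩)
  obtain ⟨j, hj⟩ := m.even_mul_succ_self.two_dvd
  obtain ⟨f, hf⟩ : d ∣ m * (m + 1) :=
    (hd.dvd_pow_iff_dvd two_ne_zero).1 (h2.trans ⟨(m + 1) * j, by rw [sq]; nth_rw 2 [hj]; ring⟩)
  refine ⟨h2, f, hf, Nat.coprime_of_dvd fun p hp hpd hpf ↦ ?_⟩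
  exact not_mul_self_dvd_mul_succ hm hp (hpd.trans h2) (fun h ↦ hpd.trans (h3 h))
    (hf ▸ mul_dvd_mul hpd hpf)

theorem Ideal.span_pair_sq_eq_span_singleton {R : Type*} [CommRing R] {d x e f : R}
    (hx : x ^ 2 = d * (e * x - f)) (hdf : IsCoprime d f) : span {d, x} ^ 2 = span {d} := by
  obtain ⟨a, b, hab⟩ := hdf
  rw [sq, span_pair_mul_span_pair]
  refine le_antisymm (span_le.2 ?_) ((span_singleton_le_iff_mem _).2 ?_)
  · rintro _ (rfl | rfl | rfl | rfl) <;> rw [SetLike.mem_coe, mem_span_singleton]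
    · exact dvd_mul_right d d
    · exact dvd_mul_right d x
    · exact dvd_mul_left d x
    · exact ⟨_, (sq x).symm.trans hx⟩
  · have hd : a * (d * d) + b * e * (d * x) - b * (x * x) = d := by
      linear_combination d * hab - b * hx
    have hmem : a * (d * d) + b * e * (d * x) - b * (x * x) ∈ span {d * d, d * x, x * d, x * x} :=
      sub_mem (add_mem (mul_mem_left _ _ (subset_span (by simp)))
        (mul_mem_left _ _ (subset_span (by simp)))) (mul_mem_left _ _ (subset_span (by simp)))
    rwa [hd] at hmem

theorem PowerBasis.discr_basis_of_minpoly_eq {F E : Type*} [Field F] [Field E] [Algebra F E]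
    (pb : PowerBasis F E) {p q : F} (h : minpoly F pb.gen = X ^ 2 + C p * X + C q) :
    Algebra.discr F pb.basis = p ^ 2 - 4 * q := by
  have hdeg : (X ^ 2 + C p * X + C q).natDegree = 2 := by compute_degree!
  have hdim : pb.dim = 2 := by rw [← pb.natDegree_minpoly, h, hdeg]
  have htr1 : Algebra.trace F E 1 = 2 := by
    rw [← map_one (algebraMap F E), Algebra.trace_algebraMap, pb.finrank, hdim]; norm_num
  have htr : Algebra.trace F E pb.gen = -p := by
    rw [pb.trace_gen_eq_nextCoeff_minpoly, h, nextCoeff_of_natDegree_pos (by omega), hdeg]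
    simp
  have hroot : pb.gen ^ 2 = -(p • pb.gen) - q • 1 := by
    have := minpoly.aeval F pb.gen
    rw [h] at this
    simp only [map_add, map_pow, aeval_X, map_mul, aeval_C, Algebra.smul_def, mul_one] at this ⊢
    linear_combination this
  have htr2 : Algebra.trace F E (pb.gen ^ 2) = p ^ 2 - 2 * q := by
    rw [hroot, map_sub, map_neg, map_smul, map_smul, htr, htr1, smul_eq_mul, smul_eq_mul]
    ring
  rw [← Algebra.discr_reindex F pb.basis (finCongr hdim), Algebra.discr_def, Matrix.det_fin_two]
  simp only [Algebra.traceMatrix_apply, Algebra.traceForm_apply, Function.comp_apply,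
    finCongr_symm, finCongr_apply, pb.coe_basis, Fin.val_cast, Fin.val_zero, Fin.val_one,
    pow_zero, pow_one, mul_one, one_mul, ← sq, one_pow]
  rw [htr1, htr, htr2]
  ring

theorem Algebra.adjoin_singleton_eq_top_of_finrank_prime {F E : Type*} [Field F] [Field E]
    [Algebra F E] (hp : (finrank F E).Prime) {x : E} (hx : x ∉ Set.range (algebraMap F E)) :
    Algebra.adjoin F {x} = ⊤ :=
  ((Subalgebra.isSimpleOrder_of_finrank_prime F E hp).eq_bot_or_eq_top _).resolve_left
    fun h ↦ hx <| Algebra.mem_bot.1 <| h ▸ Algebra.self_mem_adjoin_singleton F x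

theorem NumberField.exists_discr_eq_sq_mul_discr {K : Type*} [Field K] [NumberField K]
    {ι : Type*} [Fintype ι] [DecidableEq ι] (b : Basis ι ℚ K) (hb : ∀ i, IsIntegral ℤ (b i)) :
    ∃ c : ℤ, Algebra.discr ℚ b = c ^ 2 * discr K := by
  let B := (integralBasis K).reindex ((integralBasis K).indexEquiv b)
  have hB : ∀ i j, IsIntegral ℤ (B.toMatrix b i j) := by
    intro i j
    rw [Basis.toMatrix_apply, Basis.repr_reindex_apply]
    obtain ⟨y, hy⟩ : ∃ y : 𝓞 K, algebraMap (𝓞 K) K y = b j :=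
      ⟨⟨b j, (mem_integralClosure_iff ℤ K).2 (hb j)⟩, rfl⟩
    rw [← hy, integralBasis_repr_apply]
    exact isIntegral_algebraMap
  obtain ⟨c, hc⟩ := IsIntegrallyClosed.isIntegral_iff.1 (IsIntegral.det hB)
  refine ⟨c, ?_⟩
  rw [← B.toMatrix_map_vecMul b, Algebra.discr_of_matrix_vecMul, Basis.coe_reindex,
    Algebra.discr_reindex, ← coe_discr, ← hc]
  simp

theorem NumberField.discr_dvd_of_sq_add_mul_add_eq_zero {K : Type*} [Field K] [NumberField K]
    (hK : finrank ℚ K = 2) {x : K} (hx : x ∉ Set.range (algebraMap ℚ K)) {p q : ℤ}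
    (h : x ^ 2 + p * x + q = 0) : discr K ∣ p ^ 2 - 4 * q := by
  have hint : IsIntegral ℤ x :=
    ⟨X ^ 2 + C p * X + C q, by monicity!, by rw [← aeval_def]; simp [h]⟩
  let pb := PowerBasis.ofAdjoinEqTop' (hint.tower_top (A := ℚ))
    (Algebra.adjoin_singleton_eq_top_of_finrank_prime (hK ▸ Nat.prime_two) hx)
  have hgen : pb.gen = x := PowerBasis.ofAdjoinEqTop'_gen _ _
  have hmin : minpoly ℚ pb.gen = X ^ 2 + C (p : ℚ) * X + C (q : ℚ) := by
    refine (eq_of_monic_of_dvd_of_natDegree_le (minpoly.monic pb.isIntegral_gen) (by monicity!)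
      (minpoly.dvd ℚ _ (by simp [hgen, h])) ?_).symm
    rw [pb.natDegree_minpoly, ← pb.finrank, hK]
    compute_degree!
  obtain ⟨c, hc⟩ := exists_discr_eq_sq_mul_discr pb.basis fun i ↦ by
    rw [pb.coe_basis, hgen]; exact hint.pow _
  rw [pb.discr_basis_of_minpoly_eq hmin] at hc
  exact Dvd.intro_left (c ^ 2) (by exact_mod_cast hc.symm)

section SqrtNeg

variable {K : Type*} [Field K] {m : ℕ} {s : K}

theorem notMem_range_algebraMap_of_sq_eq_neg [CharZero K] (hm0 : 0 < m) (hs : s ^ 2 = -(m : K)) :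
    s ∉ Set.range (algebraMap ℚ K) := by
  rintro ⟨q, rfl⟩
  have hq : q ^ 2 = -(m : ℚ) := by
    apply (algebraMap ℚ K).injective
    simpa using hs
  have : (0 : ℚ) < m := by exact_mod_cast hm0
  nlinarith [sq_nonneg q]

variable [NumberField K] (hK : finrank ℚ K = 2) (hm0 : 0 < m) (hs : s ^ 2 = -(m : K))
include hK hm0 hs

theorem NumberField.discr_dvd_four_mul_of_sq_eq_neg : discr K ∣ 4 * m := by
  have h := discr_dvd_of_sq_add_mul_add_eq_zero hK (notMem_range_algebraMap_of_sq_eq_neg hm0 hs)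
    (p := 0) (q := m) (by push_cast; linear_combination hs)
  simpa using h

theorem NumberField.discr_dvd_of_sq_eq_neg_of_mod_four_eq_three (h3 : m % 4 = 3) :
    discr K ∣ m := by
  obtain ⟨k, hk⟩ : ∃ k : ℕ, m + 1 = 4 * k := ⟨(m + 1) / 4, by omega⟩
  have hkK : (m : K) + 1 = 4 * k := by exact_mod_cast hk
  have ht : (1 + s) / 2 ∉ Set.range (algebraMap ℚ K) := by
    rintro ⟨r, hr⟩
    refine notMem_range_algebraMap_of_sq_eq_neg hm0 hs ⟨2 * r - 1, ?_⟩
    simp only [map_sub, map_mul, map_ofNat, map_one, hr]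
    ring
  have h := discr_dvd_of_sq_add_mul_add_eq_zero hK ht (p := -1) (q := k)
    (by push_cast; linear_combination hs / 4 - hkK / 4)
  rwa [← dvd_neg, show -(m : ℤ) = (-1) ^ 2 - 4 * k by norm_num; omega]

end SqrtNeg

theorem ideal_Ad_sq_general (m : ℕ) (hm : Squarefree m) (hm0 : 0 < m)
    (K : Type*) [Field K] [NumberField K] (hdeg : Module.finrank ℚ K = 2)
    (s : K) (hs : s ^ 2 = -(m : K))
    (d : ℕ) (hdsf : Squarefree d) (hdd : (d : ℤ) ∣ NumberField.discr K)
    (ω : 𝓞 K) (hω : algebraMap (𝓞 K) K ω = (m : K) + s) :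
    (Ideal.span {(d : 𝓞 K), ω}) ^ 2 = Ideal.span {(d : 𝓞 K)} := by
  have h4 : d ∣ 4 * m := by exact_mod_cast hdd.trans (discr_dvd_four_mul_of_sq_eq_neg hdeg hm0 hs)
  have h3 (h : m % 4 = 3) : d ∣ m := by
    exact_mod_cast hdd.trans (discr_dvd_of_sq_eq_neg_of_mod_four_eq_three hdeg hm0 hs h)
  obtain ⟨⟨e, he⟩, f, hf, hdf⟩ := Nat.exists_mul_succ_eq_mul_coprime hm hdsf h4 h3
  have hω2 : ω ^ 2 = d * (e * ω - f) := by
    apply RingOfIntegers.coe_injective (K := K)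
    have heK : 2 * (m : K) = d * e := by exact_mod_cast he
    have hfK : (m : K) * (m + 1) = d * f := by exact_mod_cast hf
    simp only [map_pow, map_mul, map_sub, map_natCast, hω]
    linear_combination hs + (m + s) * heK - hfK
  exact Ideal.span_pair_sq_eq_span_singleton hω2 hdf.cast

/-- Let `K = ℚ(√-m)`, `m` squarefree, and let `d` be a squarefree positive divisor of the
discriminant of `K`.  Then the ideal `A_d = 𝓞 K·d + 𝓞 K·(m+√-m)` satisfies
`A_d² = d·𝓞 K`. -/
theorem ideal_Ad_sq (m : ℕ) (hm : Squarefree m) (hm0 : 0 < m)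
    (K : Type*) [Field K] [NumberField K] (hdeg : Module.finrank ℚ K = 2)
    (s : K) (hs : s ^ 2 = -(m : K))
    (d : ℕ) (hd0 : 0 < d) (hdsf : Squarefree d) (hdd : (d : ℤ) ∣ NumberField.discr K)
    (ω : 𝓞 K) (hω : algebraMap (𝓞 K) K ω = (m : K) + s) :
    (Ideal.span {(d : 𝓞 K), ω}) ^ 2 = Ideal.span {(d : 𝓞 K)} :=
  ideal_Ad_sq_general m hm hm0 K hdeg s hs d hdsf hdd ω hω
end

section
/- Let K = ℚ(√(-m)) with discriminant d_K, and let d, e ∈ ℕ be coprime squarefree divisors of d_K. Then A_d · A_e = A_{de}, where A_r = O_K·r + O_K·(m+√(-m)). -/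
open NumberField

/-- Let `K = ℚ(√-m)` and let `d, e` be coprime squarefree positive divisors of the
discriminant of `K`.  With `A_r = 𝓞 K·r + 𝓞 K·(m+√-m)`, one has `A_d·A_e = A_{de}`. -/
theorem ideal_Ad_mul_Ae (m : ℕ) (hm : Squarefree m) (hm0 : 0 < m)
    (K : Type*) [Field K] [NumberField K] (hdeg : Module.finrank ℚ K = 2)
    (s : K) (hs : s ^ 2 = -(m : K))
    (d e : ℕ) (hd0 : 0 < d) (he0 : 0 < e)
    (hdsf : Squarefree d) (hesf : Squarefree e) (hde : Nat.Coprime d e)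
    (hdd : (d : ℤ) ∣ NumberField.discr K) (hed : (e : ℤ) ∣ NumberField.discr K)
    (ω : 𝓞 K) (hω : algebraMap (𝓞 K) K ω = (m : K) + s) :
    Ideal.span {(d : 𝓞 K), ω} * Ideal.span {(e : 𝓞 K), ω}
      = Ideal.span {((d * e : ℕ) : 𝓞 K), ω} := by
  have hdI : (d : 𝓞 K) ∈ Ideal.span {(d : 𝓞 K), ω} := Ideal.subset_span (by simp)
  have hωI : ω ∈ Ideal.span {(d : 𝓞 K), ω} := Ideal.subset_span (by simp)
  have heJ : (e : 𝓞 K) ∈ Ideal.span {(e : 𝓞 K), ω} := Ideal.subset_span (by simp)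
  have hωJ : ω ∈ Ideal.span {(e : 𝓞 K), ω} := Ideal.subset_span (by simp)
  apply le_antisymm
  · rw [Ideal.span_insert, Ideal.span_insert, Ideal.sup_mul, Ideal.mul_sup, Ideal.mul_sup]
    simp only [Ideal.span_singleton_mul_span_singleton]
    have hω' : Ideal.span {ω} ≤ Ideal.span {((d * e : ℕ) : 𝓞 K), ω} := by
      rw [Ideal.span_singleton_le_iff_mem]
      exact Ideal.subset_span (by simp)
    have h1 : Ideal.span {(d : 𝓞 K) * (e : 𝓞 K)} ≤
        Ideal.span {((d * e : ℕ) : 𝓞 K), ω} := by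
      rw [Ideal.span_singleton_le_iff_mem]
      exact Ideal.subset_span (by push_cast; simp)
    have h2 : Ideal.span {(d : 𝓞 K) * ω} ≤ Ideal.span {((d * e : ℕ) : 𝓞 K), ω} := by
      refine le_trans ?_ hω'
      rw [Ideal.span_singleton_le_iff_mem]
      exact Ideal.mem_span_singleton.2 ⟨(d : 𝓞 K), mul_comm _ _⟩
    have h3 : Ideal.span {ω * (e : 𝓞 K)} ≤ Ideal.span {((d * e : ℕ) : 𝓞 K), ω} := by
      refine le_trans ?_ hω'
      rw [Ideal.span_singleton_le_iff_mem]
      exact Ideal.mem_span_singleton.2 ⟨(e : 𝓞 K), rfl⟩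
    have h4 : Ideal.span {ω * ω} ≤ Ideal.span {((d * e : ℕ) : 𝓞 K), ω} := by
      refine le_trans ?_ hω'
      rw [Ideal.span_singleton_le_iff_mem]
      exact Ideal.mem_span_singleton.2 ⟨ω, rfl⟩
    exact sup_le (sup_le h1 h2) (sup_le h3 h4)
  · apply Ideal.span_le.2
    rintro x hx
    simp only [Set.mem_insert_iff, Set.mem_singleton_iff] at hx
    rcases hx with rfl | h
    · push_cast
      exact Ideal.mul_mem_mul hdI heJ
    · rw [h]
      obtain ⟨a, b, hab⟩ : IsCoprime (d : ℤ) (e : ℤ) :=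
        Int.isCoprime_iff_gcd_eq_one.2 (by simpa using hde)
      have key : (a : 𝓞 K) * ((d : 𝓞 K) * ω) + (b : 𝓞 K) * (ω * (e : 𝓞 K)) = ω := by
        have h1 : ((a * d + b * e : ℤ) : 𝓞 K) = 1 := by rw [hab]; simp
        calc (a : 𝓞 K) * ((d : 𝓞 K) * ω) + (b : 𝓞 K) * (ω * (e : 𝓞 K))
            = ((a * d + b * e : ℤ) : 𝓞 K) * ω := by push_cast; ring
          _ = ω := by rw [h1, one_mul]
      have mem : (a : 𝓞 K) * ((d : 𝓞 K) * ω) + (b : 𝓞 K) * (ω * (e : 𝓞 K)) ∈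
          Ideal.span {(d : 𝓞 K), ω} * Ideal.span {(e : 𝓞 K), ω} :=
        Ideal.add_mem _
          (Ideal.mul_mem_left _ _ (Ideal.mul_mem_mul hdI hωJ))
          (Ideal.mul_mem_left _ _ (Ideal.mul_mem_mul hωI heJ))
      rwa [key] at mem
end
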